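/- arXiv:1709.10253 — 12 statements merged into one kernel-verified Lean document; each statement's English description precedes it below -/
import Mathlib

section
/- Let F be a field, let m, n be positive integers, let A ∈ M_m(F) and B ∈ M_n(F). Then det_1(A⊗B) = det(A)·B^{(m)}, i.e. the partial determinant of A⊗B is the n×n matrix whose (i,j) entry is det(A)·((B)_{ij})^m. -/
open Matrix Kronecker

/-- The partial determinant `det₁`: for `A ∈ M_{mn}(F) = M_m(F) ⊗ M_n(F)`,
`det1 A` is the `n × n` matrix whose `(i,j)` entry is the determinant of the
block `A_{ij} ∈ M_m(F)` given by `(A_{ij})_{kl} = A (k,i) (l,j)`. -/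
def det1 {F : Type*} [Field F] {m n : ℕ}
    (A : Matrix (Fin m × Fin n) (Fin m × Fin n) F) : Matrix (Fin n) (Fin n) F :=
  Matrix.of fun i j => Matrix.det (Matrix.of fun k l : Fin m => A (k, i) (l, j))

/-- The `m`-th Hadamard (entrywise) power of a matrix. -/
def hpow {F : Type*} [Monoid F] {n : ℕ} (B : Matrix (Fin n) (Fin n) F) (m : ℕ) :
    Matrix (Fin n) (Fin n) F :=
  Matrix.of fun i j => (B i j) ^ m

/-- Partial determinant of a Kronecker product:
`det₁(A ⊗ B) = det(A) • B^{(m)}`. -/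
theorem det1_kronecker {F : Type*} [Field F] {m n : ℕ} (hm : 0 < m) (hn : 0 < n)
    (A : Matrix (Fin m) (Fin m) F) (B : Matrix (Fin n) (Fin n) F) :
    det1 (A ⊗ₖ B) = A.det • hpow B m := by
  ext i j
  have h : (Matrix.of fun k l : Fin m => (A ⊗ₖ B) (k, i) (l, j)) = B i j • A := by
    ext k l
    simp [Matrix.kroneckerMap_apply, mul_comm]
  simp only [det1, Matrix.of_apply, h, Matrix.det_smul, hpow, Matrix.smul_apply,
    smul_eq_mul, Fintype.card_fin]
  ring
end

section
/- Let F be a field, let m, n be positive integers, let A, C ∈ M_m(F) and B, D ∈ M_n(F) with B∘D = 0 (the Hadamard product of B and D is the zero matrix). Then det_1(A⊗B + C⊗D) = det_1(A⊗B) + det_1(C⊗D). -/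
open Matrix Kronecker

theorem det_smul_add_smul_of_mul_eq_zero {R ι : Type*} [CommRing R] [NoZeroDivisors R]
    [Fintype ι] [DecidableEq ι] [Nonempty ι] {b d : R} (hbd : b * d = 0) (A C : Matrix ι ι R) :
    det (b • A + d • C) = det (b • A) + det (d • C) := by
  rcases mul_eq_zero.mp hbd with rfl | rfl <;> simp

section Kronecker

variable {F : Type*} [Field F] {m n : ℕ}
  (A C : Matrix (Fin m) (Fin m) F) (B D : Matrix (Fin n) (Fin n) F)

theorem det1_kronecker_s1 : det1 (A ⊗ₖ B) = of fun i j => det (B i j • A) := by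
  ext i j
  simp only [det1, of_apply, kroneckerMap_apply]
  congr 1
  ext k l
  simp [mul_comm]

theorem det1_kronecker_add_kronecker :
    det1 (A ⊗ₖ B + C ⊗ₖ D) = of fun i j => det (B i j • A + D i j • C) := by
  ext i j
  simp only [det1, of_apply, Matrix.add_apply, kroneckerMap_apply]
  congr 1
  ext k l
  simp [mul_comm]

end Kronecker

theorem det1_add_of_hadamard_eq_zero_general {F : Type*} [Field F] {m n : ℕ}
    (hm : 0 < m)
    (A C : Matrix (Fin m) (Fin m) F) (B D : Matrix (Fin n) (Fin n) F)
    (h : Matrix.hadamard B D = 0) :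
    det1 (A ⊗ₖ B + C ⊗ₖ D) = det1 (A ⊗ₖ B) + det1 (C ⊗ₖ D) := by
  have : Nonempty (Fin m) := Fin.pos_iff_nonempty.mp hm
  ext i j
  simp only [det1_kronecker_add_kronecker, det1_kronecker_s1, Matrix.add_apply, of_apply]
  exact det_smul_add_smul_of_mul_eq_zero (congrFun₂ h i j) A C

/-- If `B ∘ D = 0` (Hadamard product), the partial determinant is additive on
`A ⊗ B + C ⊗ D`. -/
theorem det1_add_of_hadamard_eq_zero {F : Type*} [Field F] {m n : ℕ}
    (hm : 0 < m) (hn : 0 < n)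
    (A C : Matrix (Fin m) (Fin m) F) (B D : Matrix (Fin n) (Fin n) F)
    (h : Matrix.hadamard B D = 0) :
    det1 (A ⊗ₖ B + C ⊗ₖ D) = det1 (A ⊗ₖ B) + det1 (C ⊗ₖ D) :=
  det1_add_of_hadamard_eq_zero_general hm A C B D h
end

section
/- Let F be a field, let m, n be positive integers, let A ∈ M_m(F) and B ∈ M_n(F). Then det(det_1(A⊗B)) = det(A⊗B) if and only if det(A) = 0 or det(B^{(m)}) = det(B)^m. -/
open Matrix Kronecker

/-- The partial determinant of `A ⊗ B` can be completed iff `det A = 0` or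
`det(B^{(m)}) = det(B)^m`. -/
theorem det_det1_kronecker_iff {F : Type*} [Field F] {m n : ℕ} (hm : 0 < m) (hn : 0 < n)
    (A : Matrix (Fin m) (Fin m) F) (B : Matrix (Fin n) (Fin n) F) :
    (det1 (A ⊗ₖ B)).det = (A ⊗ₖ B).det ↔
      A.det = 0 ∨ (hpow B m).det = B.det ^ m := by
  have h1 : det1 (A ⊗ₖ B) = A.det • hpow B m := by
    ext i j
    have key : (Matrix.of fun k l : Fin m => A k l * B i j) = B i j • A := by
      ext k l
      simp [mul_comm]
    simp only [det1, hpow, Matrix.of_apply, Matrix.smul_apply, Matrix.kroneckerMap_apply,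
      smul_eq_mul]
    rw [key, Matrix.det_smul, Fintype.card_fin, mul_comm]
  have h2 : (det1 (A ⊗ₖ B)).det = A.det ^ n * (hpow B m).det := by
    rw [h1, Matrix.det_smul, Fintype.card_fin]
  have h3 : (A ⊗ₖ B).det = A.det ^ n * B.det ^ m := by
    rw [Matrix.det_kronecker, Fintype.card_fin, Fintype.card_fin]
  rw [h2, h3]
  constructor
  · intro h
    by_cases hA : A.det = 0
    · exact Or.inl hA
    · exact Or.inr (mul_left_cancel₀ (pow_ne_zero n hA) h)
  · rintro (hA | hB)
    · rw [hA, zero_pow hn.ne', zero_mul, zero_mul]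
    · rw [hB]
end

section
/- Let F be a field, let m, n be positive integers, let A ∈ M_m(F) be arbitrary and let B ∈ M_n(F) be triangular (upper triangular or lower triangular). Then det(det_1(A⊗B)) = det(A⊗B). -/
open Matrix Kronecker

/-- For arbitrary `A` and triangular `B`, the partial determinant of `A ⊗ B`
can be completed. -/
theorem det_det1_kronecker_of_triangular {F : Type*} [Field F] {m n : ℕ}
    (hm : 0 < m) (hn : 0 < n)
    (A : Matrix (Fin m) (Fin m) F) (B : Matrix (Fin n) (Fin n) F)
    (hB : (∀ i j : Fin n, i < j → B i j = 0) ∨ (∀ i j : Fin n, j < i → B i j = 0)) :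
    (det1 (A ⊗ₖ B)).det = (A ⊗ₖ B).det := by
  have hblock : det1 (A ⊗ₖ B) = A.det • hpow B m := by
    ext i j
    simp only [det1, hpow, Matrix.of_apply, Matrix.smul_apply, smul_eq_mul]
    have : (Matrix.of fun k l : Fin m => (A ⊗ₖ B) (k, i) (l, j))
        = (B i j) • A := by
      ext k l
      simp [kroneckerMap_apply, mul_comm]
    rw [this, Matrix.det_smul, mul_comm, Fintype.card_fin]
  have hdiag : ∀ (C : Matrix (Fin n) (Fin n) F),
      ((∀ i j : Fin n, i < j → C i j = 0) ∨ (∀ i j : Fin n, j < i → C i j = 0)) →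
      C.det = ∏ i, C i i := by
    intro C hC
    rcases hC with h | h
    · exact Matrix.det_of_lowerTriangular C (fun i j hij => h i j hij)
    · exact Matrix.det_of_upperTriangular (fun i j hij => h i j hij)
  have hBdet : B.det = ∏ i, B i i := hdiag B hB
  have hPdet : (hpow B m).det = ∏ i, (B i i) ^ m := by
    refine hdiag _ ?_ |>.trans rfl
    rcases hB with h | h
    · exact Or.inl fun i j hij => by simp [hpow, h i j hij, pow_eq_zero_iff hm.ne']
    · exact Or.inr fun i j hij => by simp [hpow, h i j hij, pow_eq_zero_iff hm.ne']
  rw [hblock, Matrix.det_smul, Matrix.det_kronecker, hPdet, hBdet, ← Finset.prod_pow,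
    Fintype.card_fin]
  simp [Fintype.card_fin]
end

section
/- Let F be a field, let m, n be positive integers with m ≥ 1, let A ∈ M_m(F) be arbitrary and let B ∈ M_n(F) be a (0,1)-matrix (every entry of B is 0 or 1). Then det(det_1(A⊗B)) = det(A⊗B) if and only if det(A)·det(B) = 0 or det(B)^{m-1} = 1 (det(B) is an (m−1)-th root of unity). -/
open Matrix Kronecker

/-- For arbitrary `A` and a `(0,1)`-matrix `B`, the partial determinant of
`A ⊗ B` can be completed iff `det(A)·det(B) = 0` or `det B` is an
`(m-1)`-th root of unity. -/
theorem det_det1_kronecker_zero_one_iff {F : Type*} [Field F] {m n : ℕ}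
    (hm : 0 < m) (hn : 0 < n)
    (A : Matrix (Fin m) (Fin m) F) (B : Matrix (Fin n) (Fin n) F)
    (hB : ∀ i j, B i j = 0 ∨ B i j = 1) :
    (det1 (A ⊗ₖ B)).det = (A ⊗ₖ B).det ↔
      A.det * B.det = 0 ∨ B.det ^ (m - 1) = 1 := by
  have hblock : det1 (A ⊗ₖ B) = A.det • B := by
    ext i j
    have : (Matrix.of fun k l : Fin m => (A ⊗ₖ B) (k, i) (l, j)) = (B i j) • A := by
      ext k l
      simp [kroneckerMap_apply, mul_comm]
    simp only [det1, Matrix.of_apply, this, Matrix.det_smul, Matrix.smul_apply,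
      smul_eq_mul]
    rcases hB i j with h | h <;> simp [h, zero_pow hm.ne', mul_comm]
  rw [hblock, Matrix.det_smul, det_kronecker, Fintype.card_fin, Fintype.card_fin]
  set a := A.det
  set b := B.det
  rcases eq_or_ne a 0 with ha | ha
  · simp [ha, zero_pow hn.ne']
  rcases eq_or_ne b 0 with hb | hb
  · simp [hb, zero_pow hm.ne']
  have hbm : b ^ m = b ^ (m - 1) * b := by
    rw [← pow_succ, Nat.sub_add_cancel hm]
  constructor
  · intro h
    right
    rw [hbm] at h
    have h' : b = b ^ (m - 1) * b := mul_left_cancel₀ (pow_ne_zero n ha) h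
    have h'' : (1 : F) * b = b ^ (m - 1) * b := by rw [one_mul]; exact h'
    exact (mul_right_cancel₀ hb h'').symm
  · rintro (h | h)
    · rcases mul_eq_zero.mp h with h | h
      · exact absurd h ha
      · exact absurd h hb
    · rw [hbm, h, one_mul]
end

section
/- Let F be a field, let m, n be positive integers, let A, B ∈ M_m(F) and C, D ∈ M_n(F). Then det_1((A⊗C)(B⊗D)) = det_1(A⊗C)·det_1(B⊗D) if and only if det(AB) = 0 or (CD)^{(m)} = C^{(m)}D^{(m)}. -/
open Matrix Kronecker

lemma det1_kron {F : Type*} [Field F] {m n : ℕ}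
    (A : Matrix (Fin m) (Fin m) F) (C : Matrix (Fin n) (Fin n) F) :
    det1 (A ⊗ₖ C) = A.det • hpow C m := by
  ext i j
  have : (Matrix.of fun k l : Fin m => (A ⊗ₖ C) (k, i) (l, j)) = C i j • A := by
    ext k l
    simp [kroneckerMap_apply, mul_comm]
  simp only [det1, Matrix.of_apply, this, Matrix.det_smul, Fintype.card_fin,
    Matrix.smul_apply, hpow, smul_eq_mul]
  ring

/-- The partial determinant is multiplicative on Kronecker products iff
`det(AB) = 0` or `(CD)^{(m)} = C^{(m)} D^{(m)}`. -/
theorem det1_mul_kronecker_iff {F : Type*} [Field F] {m n : ℕ} (hm : 0 < m) (hn : 0 < n)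
    (A B : Matrix (Fin m) (Fin m) F) (C D : Matrix (Fin n) (Fin n) F) :
    det1 ((A ⊗ₖ C) * (B ⊗ₖ D)) = det1 (A ⊗ₖ C) * det1 (B ⊗ₖ D) ↔
      (A * B).det = 0 ∨ hpow (C * D) m = hpow C m * hpow D m := by
  rw [← Matrix.mul_kronecker_mul, det1_kron, det1_kron, det1_kron,
    Matrix.smul_mul, Matrix.mul_smul, Matrix.det_mul, smul_smul]
  constructor
  · intro h
    rcases eq_or_ne (A.det * B.det) 0 with h0 | h0
    · exact Or.inl h0
    · exact Or.inr (smul_right_injective _ h0 h)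
  · rintro (h | h)
    · simp [h]
    · rw [h]
end

section
/- Let F be a field, let m, n be positive integers, let A, B ∈ M_m(F) and C, P ∈ M_n(F), where P is a permutation matrix or a diagonal matrix. Then det_1((AB)⊗(PC)) = det_1(A⊗P)·det_1(B⊗C) and det_1((AB)⊗(CP)) = det_1(A⊗C)·det_1(B⊗P). -/
open Matrix Kronecker

lemma pow_sum_mul_aux {F : Type*} [Field F] {n m : ℕ} (hm : 0 < m)
    (f g : Fin n → F) (h : ∀ k k', f k ≠ 0 → f k' ≠ 0 → k = k') :
    (∑ k, f k * g k) ^ m = ∑ k, f k ^ m * g k ^ m := by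
  by_cases h' : ∃ k, f k ≠ 0
  · obtain ⟨k₀, hk₀⟩ := h'
    rw [Finset.sum_eq_single k₀, Finset.sum_eq_single k₀, mul_pow]
    · intro b _ hb
      rcases eq_or_ne (f b) 0 with hfb | hfb
      · simp [hfb, zero_pow hm.ne']
      · exact absurd (h b k₀ hfb hk₀) hb
    · simp
    · intro b _ hb
      rcases eq_or_ne (f b) 0 with hfb | hfb
      · simp [hfb]
      · exact absurd (h b k₀ hfb hk₀) hb
    · simp
  · push_neg at h'
    simp [h', zero_pow hm.ne']

lemma pow_sum_mul_aux' {F : Type*} [Field F] {n m : ℕ} (hm : 0 < m)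
    (f g : Fin n → F) (h : ∀ k k', g k ≠ 0 → g k' ≠ 0 → k = k') :
    (∑ k, f k * g k) ^ m = ∑ k, f k ^ m * g k ^ m := by
  have := pow_sum_mul_aux hm g f h
  simpa [mul_comm] using this

lemma det1_kron_apply {F : Type*} [Field F] {m n : ℕ}
    (A : Matrix (Fin m) (Fin m) F) (C : Matrix (Fin n) (Fin n) F) (i j : Fin n) :
    det1 (A ⊗ₖ C) i j = C i j ^ m * A.det := by
  have : (Matrix.of fun k l : Fin m => (A ⊗ₖ C) (k, i) (l, j)) = C i j • A := by
    ext k l; simp [mul_comm]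
  simp only [det1, Matrix.of_apply, this, Matrix.det_smul, Fintype.card_fin, smul_eq_mul]

/-- If `P` is a permutation matrix or a diagonal matrix, then the partial
determinant splits multiplicatively over `(AB) ⊗ (PC)` and `(AB) ⊗ (CP)`. -/
theorem det1_mul_kronecker_perm_or_diag {F : Type*} [Field F] {m n : ℕ}
    (hm : 0 < m) (hn : 0 < n)
    (A B : Matrix (Fin m) (Fin m) F) (C P : Matrix (Fin n) (Fin n) F)
    (hP : (∃ σ : Equiv.Perm (Fin n), P = σ.permMatrix F) ∨ P.IsDiag) :
    det1 ((A * B) ⊗ₖ (P * C)) = det1 (A ⊗ₖ P) * det1 (B ⊗ₖ C) ∧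
    det1 ((A * B) ⊗ₖ (C * P)) = det1 (A ⊗ₖ C) * det1 (B ⊗ₖ P) := by
  have hrow : ∀ i k k', P i k ≠ 0 → P i k' ≠ 0 → k = k' := by
    rcases hP with ⟨σ, rfl⟩ | hP
    · intro i k k' hk hk'
      simp only [Equiv.Perm.permMatrix, PEquiv.toMatrix, Equiv.toPEquiv_apply,
        Matrix.of_apply, Option.mem_def, Option.some.injEq, ne_eq, ite_eq_right_iff,
        one_ne_zero, imp_false, not_not] at hk hk'
      rw [← hk, ← hk']
    · intro i k k' hk hk'
      by_contra hne
      rcases eq_or_ne i k with rfl | h1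
      · exact hk' (hP (fun h => hne (h.symm ▸ rfl)))
      · exact hk (hP h1)
  have hcol : ∀ j k k', P k j ≠ 0 → P k' j ≠ 0 → k = k' := by
    rcases hP with ⟨σ, rfl⟩ | hP
    · intro j k k' hk hk'
      simp only [Equiv.Perm.permMatrix, PEquiv.toMatrix, Equiv.toPEquiv_apply,
        Matrix.of_apply, Option.mem_def, Option.some.injEq, ne_eq, ite_eq_right_iff,
        one_ne_zero, imp_false, not_not] at hk hk'
      exact σ.injective (hk.trans hk'.symm)
    · intro j k k' hk hk'
      by_contra hne
      rcases eq_or_ne k j with rfl | h1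
      · exact hk' (hP (fun h => hne (h ▸ rfl)))
      · exact hk (hP h1)
  constructor
  · ext i j
    simp only [Matrix.mul_apply, det1_kron_apply, Matrix.det_mul]
    rw [pow_sum_mul_aux hm (fun k => P i k) (fun k => C k j) (hrow i)]
    rw [Finset.sum_mul]
    apply Finset.sum_congr rfl
    intro k _
    ring
  · ext i j
    simp only [Matrix.mul_apply, det1_kron_apply, Matrix.det_mul]
    rw [pow_sum_mul_aux' hm (fun k => C i k) (fun k => P k j) (hcol j)]
    rw [Finset.sum_mul]
    apply Finset.sum_congr rfl
    intro k _
    ring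
end

section
/- Let F be a field of characteristic 0 and let x_1, …, x_n ∈ F. Then x_1^m + x_2^m + ⋯ + x_n^m = (x_1 + x_2 + ⋯ + x_n)^m for all positive integers m if and only if x_j·x_k = 0 for all j ≠ k with j, k ∈ {1,…,n}. -/
open Matrix Kronecker

open Finset Polynomial

/-! If `x_j x_k = 0` for `j ≠ k`, all cross terms vanish when `(∑ x_i)^m` is expanded.
Conversely, the off-diagonal products `x_j x_k` (`j ≠ k`) have `m`-th power sum
`p_m² - p_{2m} = e_1^{2m} - e_1^{2m} = 0` for every `m ≥ 1`. In characteristic zero, Newton's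
identities then make all their elementary symmetric functions vanish, so `∏ (X - x_j x_k)` is a
power of `X` and each product `x_j x_k` is nilpotent, hence zero. -/

theorem add_pow_of_mul_eq_zero {R : Type*} [CommSemiring R] {a b : R} (hab : a * b = 0)
    {m : ℕ} (hm : m ≠ 0) : (a + b) ^ m = a ^ m + b ^ m := by
  obtain ⟨k, rfl⟩ := Nat.exists_eq_succ_of_ne_zero hm
  induction k with
  | zero => simp
  | succ k ih =>
    have hab' : a ^ (k + 1) * b = 0 := by rw [pow_succ, mul_assoc, hab, mul_zero]
    have hba' : b ^ (k + 1) * a = 0 := by rw [pow_succ, mul_assoc, mul_comm b, hab, mul_zero]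
    rw [pow_succ, ih k.succ_ne_zero, add_mul, mul_add, mul_add, hab', hba', add_zero, zero_add,
      ← pow_succ, ← pow_succ]

theorem Finset.sum_pow_of_pairwise_mul_eq_zero {ι R : Type*} [CommSemiring R] {s : Finset ι}
    {x : ι → R} (h : (s : Set ι).Pairwise fun i j => x i * x j = 0) {m : ℕ} (hm : m ≠ 0) :
    (∑ i ∈ s, x i) ^ m = ∑ i ∈ s, x i ^ m := by
  classical
  induction s using Finset.induction_on with
  | empty => simp [zero_pow hm]
  | insert a s ha ih =>
    rw [coe_insert, Set.pairwise_insert] at h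
    have hmul : x a * ∑ i ∈ s, x i = 0 :=
      mul_sum s x (x a) ▸ sum_eq_zero fun i hi => (h.2 i hi (ne_of_mem_of_not_mem hi ha).symm).1
    rw [sum_insert ha, sum_insert ha, add_pow_of_mul_eq_zero hmul hm, ih h.1]

theorem Finset.sq_sum_eq_sum_sq_add_sum_offDiag {ι R : Type*} [CommSemiring R] (s : Finset ι)
    (x : ι → R) :
    (∑ i ∈ s, x i) ^ 2 = ∑ i ∈ s, x i ^ 2 + ∑ p ∈ s.offDiag, x p.1 * x p.2 := by
  classical
  rw [sq, sum_mul_sum, ← sum_product', ← diag_union_offDiag, sum_union (disjoint_diag_offDiag s),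
    diag, sum_map]
  simp [sq]

theorem Multiset.eq_zero_of_esymm_eq_zero {R : Type*} [CommRing R] [IsReduced R]
    {s : Multiset R} (h : ∀ k, 0 < k → s.esymm k = 0) {a : R} (ha : a ∈ s) : a = 0 := by
  have hprod : (s.map fun t => X - C t).prod = X ^ Multiset.card s := by
    rw [prod_X_sub_X_eq_sum_esymm, sum_range_succ', Finset.sum_eq_zero fun k _ => by rw [h (k + 1) k.succ_pos, C_0, zero_mul, mul_zero]]
    simp [Multiset.esymm]
  have := congrArg (eval a) hprod
  rw [eval_multiset_prod, Multiset.prod_eq_zero (by simpa using ⟨a, ha, sub_self a⟩), eval_pow,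
    eval_X] at this
  exact IsNilpotent.eq_zero ⟨_, this.symm⟩

theorem Multiset.esymm_map_eq_zero_of_sum_pow_eq_zero {σ R : Type*} [Fintype σ] [CommRing R]
    [NoZeroDivisors R] [CharZero R] {y : σ → R} (h : ∀ m, 0 < m → ∑ i, y i ^ m = 0) {k : ℕ}
    (hk : 0 < k) : (univ.val.map y).esymm k = 0 := by
  have newton := congrArg (MvPolynomial.aeval y) (MvPolynomial.mul_esymm_eq_sum σ R k)
  simp only [map_mul, map_sum, map_pow, map_neg, map_one, map_natCast,
    MvPolynomial.aeval_esymm_eq_multiset_esymm] at newton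
  rw [Finset.sum_eq_zero fun a ha => by
    rw [Finset.mem_filter, Finset.HasAntidiagonal.mem_antidiagonal] at ha
    simp [MvPolynomial.psum, h a.2 (by omega)]] at newton
  simpa [hk.ne'] using newton

theorem Finset.eq_zero_of_sum_pow_eq_zero {ι R : Type*} [CommRing R] [NoZeroDivisors R]
    [CharZero R] {s : Finset ι} {y : ι → R} (h : ∀ m, 0 < m → ∑ i ∈ s, y i ^ m = 0) {i : ι}
    (hi : i ∈ s) : y i = 0 := by
  have h' : ∀ m, 0 < m → ∑ j : s, y j ^ m = 0 := fun m hm => (sum_coe_sort s _).trans (h m hm)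
  exact Multiset.eq_zero_of_esymm_eq_zero
    (fun k hk => Multiset.esymm_map_eq_zero_of_sum_pow_eq_zero h' hk)
    (Multiset.mem_map_of_mem _ (mem_univ (⟨i, hi⟩ : s)))

/-- Over a field of characteristic zero, `p_m(x) = e_1(x)^m` for all `m ≥ 1`
iff the `x_j` are pairwise "orthogonal": `x_j x_k = 0` for `j ≠ k`. -/
theorem powerSum_eq_sum_pow_iff {F : Type*} [Field F] [CharZero F] {n : ℕ}
    (x : Fin n → F) :
    (∀ m : ℕ, 0 < m → ∑ i, x i ^ m = (∑ i, x i) ^ m) ↔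
      ∀ j k, j ≠ k → x j * x k = 0 := by
  refine ⟨fun h j k hjk => ?_, fun h m hm =>
    (sum_pow_of_pairwise_mul_eq_zero (fun j _ k _ => h j k) hm.ne').symm⟩
  have hoff : ∀ m, 0 < m → ∑ p ∈ univ.offDiag, (x p.1 * x p.2) ^ m = 0 := by
    intro m hm
    have hsq := sq_sum_eq_sum_sq_add_sum_offDiag univ fun i => x i ^ m
    simp only [← pow_mul, ← mul_pow, h m hm, h (m * 2) (by omega)] at hsq
    linear_combination -hsq
  exact eq_zero_of_sum_pow_eq_zero (i := (j, k)) hoff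
    (mem_offDiag.2 ⟨mem_univ j, mem_univ k, hjk⟩)
end

section
/- Let F be a field of characteristic 0 and let C, D ∈ M_n(F). Then (CD)^{(m)} = C^{(m)}D^{(m)} holds for all positive integers m if and only if (C)_{ik}(D)_{kj}(C)_{ik'}(D)_{k'j} = 0 for all i, j ∈ {1,…,n} and all k, k' ∈ {1,…,n} with k ≠ k'. -/
open Matrix Kronecker

/-- Pairwise products zero ⇒ power of sum = sum of powers. -/
lemma sum_pow_eq_pow_sum {F : Type*} [CommRing F] {n : ℕ} (a : Fin n → F)
    (h : ∀ k k', k ≠ k' → a k * a k' = 0) :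
    ∀ m : ℕ, 1 ≤ m → (∑ k, a k) ^ m = ∑ k, (a k) ^ m := by
  intro m hm
  induction m with
  | zero => omega
  | succ t ih =>
    rcases Nat.eq_or_lt_of_le hm with h1 | h1
    · simp [← h1]
    · have ht : 1 ≤ t := by omega
      have := ih ht
      rw [pow_succ, this, Finset.sum_mul_sum]
      apply Finset.sum_congr rfl
      intro k _
      rw [Finset.sum_eq_single k]
      · ring
      · intro k' _ hk'
        obtain ⟨u, rfl⟩ : ∃ u, t = u + 1 := ⟨t - 1, by omega⟩
        have : a k * a k' = 0 := h k k' (Ne.symm hk')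
        calc a k ^ (u+1) * a k' = a k ^ u * (a k * a k') := by ring
        _ = 0 := by rw [this, mul_zero]
      · intro hk; exact absurd (Finset.mem_univ k) hk

/-- Independence of power functions for distinct nonzero elements of a field. -/
lemma indep_powers {F : Type*} [Field F] :
    ∀ (T : Finset F), (0:F) ∉ T → ∀ (c : F → F),
      (∀ m : ℕ, 1 ≤ m → ∑ v ∈ T, c v * v ^ m = 0) →
      ∀ v ∈ T, c v = 0 := by
  classical
  intro T
  induction T using Finset.strongInduction with
  | _ T ih =>
    intro h0 c hsum v hv
    have key : ∀ u ∈ T.erase v, c u * (u - v) = 0 := by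
      refine ih (T.erase v) (Finset.erase_ssubset hv)
        (fun h => h0 (Finset.mem_of_mem_erase h)) (fun u => c u * (u - v)) ?_
      intro m hm
      have h1 := hsum (m + 1) (by omega)
      have h2 := hsum m hm
      have hT : ∑ u ∈ T, c u * (u - v) * u ^ m = 0 := by
        have : ∑ u ∈ T, c u * (u - v) * u ^ m
            = (∑ u ∈ T, c u * u ^ (m+1)) - v * ∑ u ∈ T, c u * u ^ m := by
          rw [Finset.mul_sum, ← Finset.sum_sub_distrib]
          apply Finset.sum_congr rfl
          intro u _; ring
        rw [this, h1, h2, mul_zero, sub_zero]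
      have herase : ∑ u ∈ T.erase v, (fun u => c u * (u - v)) u * u ^ m
          = ∑ u ∈ T, c u * (u - v) * u ^ m :=
        Finset.sum_erase T (by simp)
      rw [herase]; exact hT
    have hrest : ∀ u ∈ T.erase v, c u = 0 := by
      intro u hu
      have hne : u - v ≠ 0 := sub_ne_zero.mpr (Finset.ne_of_mem_erase hu)
      have := key u hu
      exact (mul_eq_zero.mp this).resolve_right hne
    have h1 := hsum 1 le_rfl
    rw [← Finset.add_sum_erase T _ hv, Finset.sum_eq_zero
      (fun u hu => by rw [hrest u hu, zero_mul]), add_zero, pow_one] at h1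
    have hvne : v ≠ 0 := fun h => h0 (h ▸ hv)
    exact (mul_eq_zero.mp h1).resolve_right hvne

lemma key_scalar {F : Type*} [Field F] [CharZero F] {n : ℕ} (a : Fin n → F)
    (hsum : ∀ m : ℕ, 1 ≤ m → (∑ k, a k) ^ m = ∑ k, (a k) ^ m) :
    ∀ k k', k ≠ k' → a k * a k' = 0 := by
  classical
  set s : F := ∑ k, a k with hs
  set S : Finset F := (Finset.univ.image a) ∪ {s} with hS
  set T : Finset F := S.erase 0 with hT
  set c : F → F := fun v =>
    ((Finset.univ.filter (fun k => a k = v)).card : F) - (if v = s then 1 else 0) with hc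
  have hzero : ∀ m : ℕ, 1 ≤ m → ∑ v ∈ T, c v * v ^ m = 0 := by
    intro m hm
    have h0m : (0:F) ^ m = 0 := zero_pow (by omega)
    have hTS : ∑ v ∈ T, c v * v ^ m = ∑ v ∈ S, c v * v ^ m :=
      Finset.sum_erase S (by rw [h0m, mul_zero])
    have hcard : ∑ v ∈ S, ((Finset.univ.filter (fun k => a k = v)).card : F) * v ^ m
        = ∑ k, (a k) ^ m := by
      rw [Finset.sum_comp (fun v : F => v ^ m) a]
      rw [← Finset.sum_subset (Finset.subset_union_left : Finset.univ.image a ⊆ S)]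
      · apply Finset.sum_congr rfl
        intro v _; rw [nsmul_eq_mul]
      · intro v _ hv
        have : (Finset.univ.filter (fun k => a k = v)) = ∅ := by
          rw [Finset.filter_eq_empty_iff]
          intro k _ hk
          exact hv (hk ▸ Finset.mem_image_of_mem a (Finset.mem_univ k))
        rw [this]; simp
    have hif : ∑ v ∈ S, (if v = s then (1:F) else 0) * v ^ m = s ^ m := by
      rw [Finset.sum_congr rfl (fun v _ => by
        rw [ite_mul, one_mul, zero_mul])]
      rw [Finset.sum_ite_eq' S s (fun v => v ^ m)]
      simp [hS]
    rw [hTS]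
    have : ∑ v ∈ S, c v * v ^ m
        = (∑ v ∈ S, ((Finset.univ.filter (fun k => a k = v)).card : F) * v ^ m)
          - ∑ v ∈ S, (if v = s then (1:F) else 0) * v ^ m := by
      rw [← Finset.sum_sub_distrib]
      apply Finset.sum_congr rfl
      intro v _; rw [hc]; ring
    rw [this, hcard, hif, ← hsum m hm, sub_self]
  have hczero := indep_powers T (Finset.notMem_erase 0 S) c hzero
  intro k k' hkk'
  by_contra hne
  have hak : a k ≠ 0 := fun h => hne (by rw [h, zero_mul])
  have hak' : a k' ≠ 0 := fun h => hne (by rw [h, mul_zero])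
  have hmemT : ∀ j : Fin n, a j ≠ 0 → a j ∈ T := fun j hj =>
    Finset.mem_erase.mpr ⟨hj, Finset.mem_union_left _
      (Finset.mem_image_of_mem a (Finset.mem_univ j))⟩
  have cardof : ∀ v, v ∈ T → c v = 0 → ((Finset.univ.filter (fun k => a k = v)).card : F) = (if v = s then 1 else 0) := by
    intro v hv h
    have := sub_eq_zero.mp h
    exact this
  by_cases heq : a k = a k'
  · -- same value, multiplicity ≥ 2
    have hv := hmemT k hak
    have h := cardof _ hv (hczero _ hv)
    have hcard2 : 2 ≤ (Finset.univ.filter (fun j => a j = a k)).card := by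
      apply Finset.one_lt_card.mpr
      exact ⟨k, by simp, k', by simp [heq.symm], hkk'⟩
    split_ifs at h with h'
    · have : (Finset.univ.filter (fun j => a j = a k)).card = 1 := by
        exact_mod_cast h
      omega
    · have : (Finset.univ.filter (fun j => a j = a k)).card = 0 := by
        exact_mod_cast h
      omega
  · -- distinct values, at least one ≠ s
    have hone : a k ≠ s ∨ a k' ≠ s := by
      by_contra hcon
      push_neg at hcon
      exact heq (hcon.1.trans hcon.2.symm)
    rcases hone with h' | h'
    · have hv := hmemT k hak
      have h := cardof _ hv (hczero _ hv)
      rw [if_neg h'] at h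
      have : (Finset.univ.filter (fun j => a j = a k)).card = 0 := by exact_mod_cast h
      have : k ∈ Finset.univ.filter (fun j => a j = a k) := by simp
      simp_all
    · have hv := hmemT k' hak'
      have h := cardof _ hv (hczero _ hv)
      rw [if_neg h'] at h
      have : (Finset.univ.filter (fun j => a j = a k')).card = 0 := by exact_mod_cast h
      have : k' ∈ Finset.univ.filter (fun j => a j = a k') := by simp
      simp_all

/-- Over a field of characteristic zero, the Hadamard power distributes over the
matrix product `CD` for all `m ≥ 1` iff
`C_{ik} D_{kj} C_{ik'} D_{k'j} = 0` for all `i, j` and `k ≠ k'`. -/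
theorem hpow_mul_iff {F : Type*} [Field F] [CharZero F] {n : ℕ}
    (C D : Matrix (Fin n) (Fin n) F) :
    (∀ m : ℕ, 0 < m → hpow (C * D) m = hpow C m * hpow D m) ↔
      ∀ i j k k', k ≠ k' → C i k * D k j * (C i k' * D k' j) = 0 := by
  constructor
  · intro h i j
    apply key_scalar (fun k => C i k * D k j)
    intro m hm
    have := congrFun (congrFun (h m hm) i) j
    simp only [hpow, Matrix.mul_apply, Matrix.of_apply] at this
    rw [this]
    apply Finset.sum_congr rfl
    intro k _
    rw [mul_pow]
  · intro h m hm
    ext i j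
    simp only [hpow, Matrix.mul_apply, Matrix.of_apply]
    rw [sum_pow_eq_pow_sum (fun k => C i k * D k j) (fun k k' hk => h i j k k' hk) m hm]
    apply Finset.sum_congr rfl
    intro k _
    rw [mul_pow]
end

section
/- Let F be a linearly ordered field and let M ⊆ M_n(F). Then the following are equivalent: (1) M is a monoid of matrices satisfying (CD)^{(m)} = C^{(m)}D^{(m)} for all C, D ∈ M and all positive integers m; (2) M is a monoid of matrices satisfying (a) (CD)^{(2)} = C^{(2)}D^{(2)} for all C, D ∈ M, and (b) for all C, D ∈ M and all i, j ∈ {1,…,n} there exists k ∈ {1,…,n} such that (CD)_{ij} = (C)_{ik}(D)_{kj}. -/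
open Matrix Kronecker

/-! Entrywise, `hpow (C * D) m = hpow C m * hpow D m` says that the products
`a k = C i k * D k j` satisfy `(∑ a)^m = ∑ a^m`. Over an ordered ring the cases `m = 2, 4`
give `(∑ a²)² = ∑ (a²)²`, and since the `a k ^ 2` are nonnegative their off-diagonal products
vanish, so at most one `a k` is nonzero. Conversely, if `∑ a = a k`, the case `m = 2` makes
the squares of the other terms sum to zero. -/

section PowerSums

variable {ι R : Type*} [Fintype ι] {a : ι → R}

theorem exists_forall_ne_eq_zero_of_pairwise_mul_eq_zero [MulZeroClass R] [NoZeroDivisors R]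
    [Nonempty ι] (h : Pairwise fun k l => a k * a l = 0) : ∃ k, ∀ l ≠ k, a l = 0 := by
  by_cases hnonzero : ∃ k, a k ≠ 0
  · obtain ⟨k, hk⟩ := hnonzero
    exact ⟨k, fun l hl => (mul_eq_zero.1 (h hl.symm)).resolve_left hk⟩
  · exact ⟨Classical.arbitrary ι, fun l _ => not_exists_not.1 hnonzero l⟩

theorem sum_pow_eq_sum_pow_of_forall_ne_eq_zero [Semiring R] {k : ι} (ha : ∀ l ≠ k, a l = 0)
    {m : ℕ} (hm : m ≠ 0) : (∑ l, a l) ^ m = ∑ l, a l ^ m := by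
  have hpow : ∀ l ≠ k, a l ^ m = 0 := fun l hl => by rw [ha l hl, zero_pow hm]
  rw [Fintype.sum_eq_single k ha, Fintype.sum_eq_single k hpow]

variable [CommRing R] [LinearOrder R] [IsStrictOrderedRing R]

theorem pairwise_mul_eq_zero_of_sq_sum_eq_sum_sq {b : ι → R} (hb : ∀ k, 0 ≤ b k)
    (h : (∑ k, b k) ^ 2 = ∑ k, b k ^ 2) : Pairwise fun k l => b k * b l = 0 := by
  classical
  have hsplit : ∀ k, ∑ l, b k * b l = b k ^ 2 + ∑ l ∈ Finset.univ.erase k, b k * b l := fun k => by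
    rw [sq, Finset.add_sum_erase _ (fun l => b k * b l) (Finset.mem_univ k)]
  have hoff : ∑ k, ∑ l ∈ Finset.univ.erase k, b k * b l = 0 := by
    have hexpand : (∑ k, b k) ^ 2 = ∑ k, ∑ l, b k * b l := by rw [sq, Finset.sum_mul_sum]
    rw [hexpand, Finset.sum_congr rfl fun k _ => hsplit k, Finset.sum_add_distrib] at h
    linarith
  have hnonneg : ∀ k l, 0 ≤ b k * b l := fun k l => mul_nonneg (hb k) (hb l)
  intro k l hkl
  have hrow := (Finset.sum_eq_zero_iff_of_nonneg fun k _ =>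
    Finset.sum_nonneg fun l _ => hnonneg k l).1 hoff k (Finset.mem_univ k)
  exact (Finset.sum_eq_zero_iff_of_nonneg fun l _ => hnonneg k l).1 hrow l
    (Finset.mem_erase.2 ⟨hkl.symm, Finset.mem_univ l⟩)

theorem pairwise_mul_eq_zero_of_sum_pow_eq_sum_pow
    (h2 : (∑ k, a k) ^ 2 = ∑ k, a k ^ 2) (h4 : (∑ k, a k) ^ 4 = ∑ k, a k ^ 4) :
    Pairwise fun k l => a k * a l = 0 := by
  have hsq : (∑ k, a k ^ 2) ^ 2 = ∑ k, (a k ^ 2) ^ 2 := by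
    simpa only [← h2, ← pow_mul] using h4
  intro k l hkl
  have : a k ^ 2 * a l ^ 2 = 0 :=
    pairwise_mul_eq_zero_of_sq_sum_eq_sum_sq (fun k => sq_nonneg (a k)) hsq hkl
  rwa [← mul_pow, pow_eq_zero_iff two_ne_zero] at this

theorem forall_ne_eq_zero_of_sum_eq_of_sq_sum_eq_sum_sq {k : ι} (hk : ∑ l, a l = a k)
    (h2 : (∑ l, a l) ^ 2 = ∑ l, a l ^ 2) : ∀ l ≠ k, a l = 0 := by
  classical
  have hrest : ∑ l ∈ Finset.univ.erase k, a l ^ 2 = 0 := by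
    have := Finset.add_sum_erase _ (fun l => a l ^ 2) (Finset.mem_univ k)
    rw [hk] at h2
    linarith
  intro l hl
  exact pow_eq_zero_iff two_ne_zero |>.1 <| (Finset.sum_eq_zero_iff_of_nonneg fun l _ =>
    sq_nonneg (a l)).1 hrest l (Finset.mem_erase.2 ⟨hl, Finset.mem_univ l⟩)

theorem forall_sum_pow_eq_sum_pow_iff [Nonempty ι] :
    (∀ m : ℕ, 0 < m → (∑ k, a k) ^ m = ∑ k, a k ^ m) ↔
      (∑ k, a k) ^ 2 = ∑ k, a k ^ 2 ∧ ∃ k, ∑ l, a l = a k := by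
  constructor
  · intro h
    obtain ⟨k, hk⟩ := exists_forall_ne_eq_zero_of_pairwise_mul_eq_zero
      (pairwise_mul_eq_zero_of_sum_pow_eq_sum_pow (h 2 two_pos) (h 4 four_pos))
    exact ⟨h 2 two_pos, k, Fintype.sum_eq_single k hk⟩
  · rintro ⟨h2, k, hk⟩ m hm
    exact sum_pow_eq_sum_pow_of_forall_ne_eq_zero
      (forall_ne_eq_zero_of_sum_eq_of_sq_sum_eq_sum_sq hk h2) hm.ne'

end PowerSums

section HadamardPower

variable {R : Type*} {n : ℕ}

theorem hpow_mul_eq_iff [CommSemiring R] {C D : Matrix (Fin n) (Fin n) R} {m : ℕ} :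
    hpow (C * D) m = hpow C m * hpow D m ↔
      ∀ i j, (∑ k, C i k * D k j) ^ m = ∑ k, (C i k * D k j) ^ m := by
  simp only [← Matrix.ext_iff, hpow, mul_apply, of_apply, mul_pow]

theorem forall_hpow_mul_eq_iff [CommRing R] [LinearOrder R] [IsStrictOrderedRing R]
    {C D : Matrix (Fin n) (Fin n) R} :
    (∀ m : ℕ, 0 < m → hpow (C * D) m = hpow C m * hpow D m) ↔
      hpow (C * D) 2 = hpow C 2 * hpow D 2 ∧ ∀ i j, ∃ k, (C * D) i j = C i k * D k j := by
  simp only [hpow_mul_eq_iff, mul_apply]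
  constructor
  · intro h
    refine ⟨h 2 two_pos, fun i j => ?_⟩
    have : Nonempty (Fin n) := ⟨i⟩
    exact (forall_sum_pow_eq_sum_pow_iff.1 fun m hm => h m hm i j).2
  · rintro ⟨h2, hsingle⟩ m hm i j
    have : Nonempty (Fin n) := ⟨i⟩
    exact forall_sum_pow_eq_sum_pow_iff.2 ⟨h2 i j, hsingle i j⟩ m hm

end HadamardPower

/-- Characterization of monoids of matrices over a linearly ordered field on
which the Hadamard power distributes over matrix multiplication. -/
theorem monoid_hpow_mul_equiv {F : Type*} [Field F] [LinearOrder F] [IsStrictOrderedRing F] {n : ℕ}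
    (M : Set (Matrix (Fin n) (Fin n) F)) :
    ((1 : Matrix (Fin n) (Fin n) F) ∈ M ∧ (∀ C ∈ M, ∀ D ∈ M, C * D ∈ M) ∧
      (∀ C ∈ M, ∀ D ∈ M, ∀ m : ℕ, 0 < m → hpow (C * D) m = hpow C m * hpow D m)) ↔
    ((1 : Matrix (Fin n) (Fin n) F) ∈ M ∧ (∀ C ∈ M, ∀ D ∈ M, C * D ∈ M) ∧
      (∀ C ∈ M, ∀ D ∈ M, hpow (C * D) 2 = hpow C 2 * hpow D 2) ∧
      (∀ C ∈ M, ∀ D ∈ M, ∀ i j, ∃ k, (C * D) i j = C i k * D k j)) := by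
  simp only [forall_hpow_mul_eq_iff, imp_and, forall_and]
end

section
/- Let F be a linearly ordered field and let M ⊆ M_n(F). Then the following are equivalent: (1) M is a monoid of matrices closed under the matrix transpose and satisfying (CD)^{(m)} = C^{(m)}D^{(m)} for all C, D ∈ M and all positive integers m; (2) M is a monoid of matrices closed under the matrix transpose in which every matrix has at most one nonzero entry in each row and at most one nonzero entry in each column. -/
open Matrix Kronecker

/-!
If every row of `C` has at most one nonzero entry, each entry of `C * D` is a sum with at
most one nonzero term, so it commutes with taking powers. Conversely, the diagonal entry
`(i, i)` of `(C * Cᵀ)^(2) = C^(2) * (Cᵀ)^(2)` reads `(∑ₖ aₖ)² = ∑ₖ aₖ²` with `aₖ = C i k ^ 2 ≥ 0`,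
and over an ordered field this forces at most one `aₖ` to be nonzero. Columns are handled
by transposing.
-/

lemma eq_of_sq_sum_eq_sum_sq {ι R : Type*} [CommRing R] [LinearOrder R] [IsStrictOrderedRing R]
    {s : Finset ι} {a : ι → R} (ha : ∀ i ∈ s, 0 ≤ a i)
    (h : (∑ i ∈ s, a i) ^ 2 = ∑ i ∈ s, a i ^ 2) {j j' : ι} (hj : j ∈ s) (hj' : j' ∈ s)
    (hj0 : a j ≠ 0) (hj'0 : a j' ≠ 0) : j = j' := by
  classical
  by_contra hne
  set S := ∑ i ∈ s, a i
  have hj_pos : 0 < a j := (ha j hj).lt_of_ne' hj0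
  have hj'_pos : 0 < a j' := (ha j' hj').lt_of_ne' hj'0
  have hpair_le : a j + a j' ≤ S := by
    rw [← Finset.sum_pair hne]
    exact Finset.sum_le_sum_of_subset_of_nonneg (by simp [Finset.insert_subset_iff, hj, hj'])
      fun i hi _ => ha i hi
  -- `S² = ∑ aᵢ S` dominates `∑ aᵢ²` termwise, strictly at `j` because `a j < S`.
  have hlt : ∑ i ∈ s, a i ^ 2 < ∑ i ∈ s, a i * S := by
    refine Finset.sum_lt_sum (fun i hi => ?_) ⟨j, hj, ?_⟩
    · rw [sq]
      exact mul_le_mul_of_nonneg_left (Finset.single_le_sum ha hi) (ha i hi)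
    · rw [sq]
      exact mul_lt_mul_of_pos_left (by linarith) hj_pos
  rw [← Finset.sum_mul, ← sq, ← h] at hlt
  exact hlt.false

lemma pow_sum_eq_sum_pow_of_support_subsingleton {ι R : Type*} [Fintype ι] [CommSemiring R]
    {f : ι → R} (hf : (Function.support f).Subsingleton) {m : ℕ} (hm : m ≠ 0) :
    (∑ k, f k) ^ m = ∑ k, f k ^ m := by
  by_cases h : ∃ k₀, f k₀ ≠ 0
  · obtain ⟨k₀, hk₀⟩ := h
    have hzero : ∀ k ≠ k₀, f k = 0 := fun k hk => by_contra fun hfk => hk (hf hfk hk₀)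
    rw [Fintype.sum_eq_single k₀ hzero,
      Fintype.sum_eq_single k₀ fun k hk => by rw [hzero k hk, zero_pow hm]]
  · simp only [not_exists, not_not] at h
    simp [h, zero_pow hm]

section Matrix

variable {F : Type*} {n : ℕ}

lemma hpow_mul_of_row_support_subsingleton [CommSemiring F] {C : Matrix (Fin n) (Fin n) F}
    (hC : ∀ i, (Function.support (C i)).Subsingleton) (D : Matrix (Fin n) (Fin n) F)
    {m : ℕ} (hm : m ≠ 0) : hpow (C * D) m = hpow C m * hpow D m := by
  ext i j
  have hrow : (Function.support fun k => C i k * D k j).Subsingleton :=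
    (hC i).anti (Function.support_mul_subset_left _ _)
  simp only [hpow, mul_apply, of_apply, pow_sum_eq_sum_pow_of_support_subsingleton hrow hm,
    mul_pow]

lemma row_support_subsingleton_of_hpow_mul_transpose [CommRing F] [LinearOrder F]
    [IsStrictOrderedRing F] {C : Matrix (Fin n) (Fin n) F}
    (hC : hpow (C * Cᵀ) 2 = hpow C 2 * hpow Cᵀ 2) (i : Fin n) :
    (Function.support (C i)).Subsingleton := by
  intro j hj j' hj'
  have hdiag : (∑ k, C i k ^ 2) ^ 2 = ∑ k, (C i k ^ 2) ^ 2 := by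
    simpa [hpow, mul_apply, ← sq, ← pow_mul] using congrFun (congrFun hC i) i
  exact eq_of_sq_sum_eq_sum_sq (fun k _ => sq_nonneg (C i k)) hdiag (Finset.mem_univ j)
    (Finset.mem_univ j') (pow_ne_zero 2 hj) (pow_ne_zero 2 hj')

end Matrix

/-- A transpose-closed monoid of matrices over a linearly ordered field on which
the Hadamard power distributes over matrix multiplication is exactly a
transpose-closed monoid of matrices with at most one nonzero entry in each row
and each column. -/
theorem monoid_hpow_mul_transpose_equiv {F : Type*} [Field F] [LinearOrder F] [IsStrictOrderedRing F] {n : ℕ}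
    (M : Set (Matrix (Fin n) (Fin n) F)) :
    ((1 : Matrix (Fin n) (Fin n) F) ∈ M ∧ (∀ C ∈ M, ∀ D ∈ M, C * D ∈ M) ∧
      (∀ C ∈ M, Cᵀ ∈ M) ∧
      (∀ C ∈ M, ∀ D ∈ M, ∀ m : ℕ, 0 < m → hpow (C * D) m = hpow C m * hpow D m)) ↔
    ((1 : Matrix (Fin n) (Fin n) F) ∈ M ∧ (∀ C ∈ M, ∀ D ∈ M, C * D ∈ M) ∧
      (∀ C ∈ M, Cᵀ ∈ M) ∧
      (∀ C ∈ M, (∀ i j j', C i j ≠ 0 → C i j' ≠ 0 → j = j') ∧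
                (∀ i i' j, C i j ≠ 0 → C i' j ≠ 0 → i = i'))) := by
  refine and_congr_right fun _ => and_congr_right fun _ => and_congr_right fun hT => ?_
  constructor
  · intro hmul
    have hrows : ∀ C ∈ M, ∀ i, (Function.support (C i)).Subsingleton := fun C hC =>
      row_support_subsingleton_of_hpow_mul_transpose (hmul C hC Cᵀ (hT C hC) 2 two_pos)
    exact fun C hC => ⟨fun i j j' hj hj' => hrows C hC i hj hj',
      fun i i' j hi hi' => hrows Cᵀ (hT C hC) j hi hi'⟩
  · intro hsupp C hC D _ m hm
    exact hpow_mul_of_row_support_subsingleton (fun i j hj j' hj' => (hsupp C hC).1 i j j' hj hj')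
      D hm.ne'
end

section
/- Let F be a linearly ordered field and let M ⊆ M_2(F). Then the following are equivalent: (1) M is a monoid of matrices satisfying det(C^{(m)}) = det(C)^m for all C ∈ M and all positive integers m, and (CD)^{(m)} = C^{(m)}D^{(m)} for all C, D ∈ M and all positive integers m; (2) M is a monoid of matrices with M ⊆ D_2(F) ∪ C_2(F) or M ⊆ D_2(F) ∪ R_2(F), where D_2(F) is the set of diagonal 2×2 matrices over F, R_2(F) is the set of 2×2 matrices over F with at most one nonzero row, and C_2(F) is the set of 2×2 matrices over F with at most one nonzero column. -/
open Matrix Kronecker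

/-!
Testing the Hadamard-power conditions at `m = 2` is enough. Since `2 ≠ 0`, the identity
`(CD)^{(2)} = C^{(2)} D^{(2)}` says that in every sum `(CD)_{il} = C_{i0} D_{0l} + C_{i1} D_{1l}`
one of the two terms vanishes, and `det (C^{(2)}) = (det C)^2` says `C_{01} C_{10} det C = 0`.
Together (with `D = C`) these force each `C ∈ M` to be diagonal, or to have a single nonzero
column or row. If some `C ∈ M` is not in `D₂ ∪ C₂`, it has a row with two nonzero entries;
multiplying it by any `D ∈ C₂ ∩ M` then shows that the nonzero column of `D` has at most one
nonzero entry, so `D ∈ R₂`. Conversely, if every row of `C` or every column of `D` has at most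
one nonzero entry, each entry of `CD` is a single product `C_{ik} D_{kl}`, and Hadamard powers
are multiplicative on such entries.
-/

namespace Matrix

variable {ι κ α : Type*}

def SupportedOnOneColumn [Zero α] (A : Matrix ι κ α) : Prop :=
  ∃ j, ∀ j', j' ≠ j → ∀ i, A i j' = 0

def SupportedOnOneRow [Zero α] (A : Matrix ι κ α) : Prop :=
  ∃ i, ∀ i', i' ≠ i → ∀ j, A i' j = 0

def EachRowSupportedOnOne [Zero α] (A : Matrix ι ι α) : Prop :=
  ∀ i, ∃ k, ∀ k', k' ≠ k → A i k' = 0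

def EachColumnSupportedOnOne [Zero α] (A : Matrix ι ι α) : Prop :=
  ∀ l, ∃ k, ∀ k', k' ≠ k → A k' l = 0

theorem IsDiag.eachRowSupportedOnOne [Zero α] {A : Matrix ι ι α} (h : A.IsDiag) :
    A.EachRowSupportedOnOne :=
  fun i => ⟨i, fun _ hk => h hk.symm⟩

theorem IsDiag.eachColumnSupportedOnOne [Zero α] {A : Matrix ι ι α} (h : A.IsDiag) :
    A.EachColumnSupportedOnOne :=
  fun l => ⟨l, fun _ hk => h hk⟩

theorem SupportedOnOneColumn.eachRowSupportedOnOne [Zero α] {A : Matrix ι ι α}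
    (h : A.SupportedOnOneColumn) : A.EachRowSupportedOnOne :=
  let ⟨j, hj⟩ := h
  fun i => ⟨j, fun k' hk => hj k' hk i⟩

theorem SupportedOnOneRow.eachColumnSupportedOnOne [Zero α] {A : Matrix ι ι α}
    (h : A.SupportedOnOneRow) : A.EachColumnSupportedOnOne :=
  let ⟨i, hi⟩ := h
  fun l => ⟨i, fun k' hk => hi k' hk l⟩

section FinTwo

variable [Zero α] {A : Matrix (Fin 2) (Fin 2) α}

theorem isDiag_fin_two_iff : A.IsDiag ↔ A 0 1 = 0 ∧ A 1 0 = 0 := by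
  refine ⟨fun h => ⟨h (by decide), h (by decide)⟩, fun ⟨h01, h10⟩ i j hij => ?_⟩
  fin_cases i <;> fin_cases j <;> simp_all

theorem supportedOnOneColumn_fin_two_iff :
    A.SupportedOnOneColumn ↔ (A 0 1 = 0 ∧ A 1 1 = 0) ∨ (A 0 0 = 0 ∧ A 1 0 = 0) := by
  simp [SupportedOnOneColumn, Fin.exists_fin_two, Fin.forall_fin_two]

theorem supportedOnOneRow_fin_two_iff :
    A.SupportedOnOneRow ↔ (A 1 0 = 0 ∧ A 1 1 = 0) ∨ (A 0 0 = 0 ∧ A 0 1 = 0) := by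
  simp [SupportedOnOneRow, Fin.exists_fin_two, Fin.forall_fin_two]

theorem exists_row_ne_zero_of_not_supportedOnOneColumn {C : Matrix (Fin 2) (Fin 2) α}
    (hC : C.SupportedOnOneRow) (hC' : ¬ C.SupportedOnOneColumn) :
    ∃ i, C i 0 ≠ 0 ∧ C i 1 ≠ 0 := by
  rw [supportedOnOneRow_fin_two_iff] at hC
  rw [supportedOnOneColumn_fin_two_iff] at hC'
  rcases hC with ⟨h10, h11⟩ | ⟨h00, h01⟩
  · exact ⟨0, by simp_all⟩
  · exact ⟨1, by simp_all⟩

end FinTwo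

end Matrix

section HadamardPower

variable {R : Type*} [CommSemiring R] {n m : ℕ}

theorem hpow_mul_apply_of_sum_single {C D : Matrix (Fin n) (Fin n) R} {i l : Fin n}
    (h : ∃ k, ∀ k', k' ≠ k → C i k' * D k' l = 0) (hm : m ≠ 0) :
    hpow (C * D) m i l = (hpow C m * hpow D m) i l := by
  obtain ⟨k, hk⟩ := h
  have hk' : ∀ k', k' ≠ k → C i k' ^ m * D k' l ^ m = 0 := fun k' hne => by
    rw [← mul_pow, hk k' hne, zero_pow hm]
  simp only [hpow, mul_apply, of_apply]
  rw [Finset.sum_eq_single k (fun k' _ => hk k') (by simp),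
    Finset.sum_eq_single k (fun k' _ => hk' k') (by simp), mul_pow]

theorem hpow_mul_of_eachRowSupportedOnOne {C : Matrix (Fin n) (Fin n) R}
    (hC : C.EachRowSupportedOnOne) (D : Matrix (Fin n) (Fin n) R) (hm : m ≠ 0) :
    hpow (C * D) m = hpow C m * hpow D m := by
  ext i l
  obtain ⟨k, hk⟩ := hC i
  exact hpow_mul_apply_of_sum_single ⟨k, fun k' hne => by rw [hk k' hne, zero_mul]⟩ hm

theorem hpow_mul_of_eachColumnSupportedOnOne (C : Matrix (Fin n) (Fin n) R)
    {D : Matrix (Fin n) (Fin n) R} (hD : D.EachColumnSupportedOnOne) (hm : m ≠ 0) :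
    hpow (C * D) m = hpow C m * hpow D m := by
  ext i l
  obtain ⟨k, hk⟩ := hD l
  exact hpow_mul_apply_of_sum_single ⟨k, fun k' hne => by rw [hk k' hne, mul_zero]⟩ hm

end HadamardPower

theorem det_hpow_fin_two {R : Type*} [CommRing R] {m : ℕ} {C : Matrix (Fin 2) (Fin 2) R}
    (h : C.IsDiag ∨ C.SupportedOnOneColumn ∨ C.SupportedOnOneRow) (hm : m ≠ 0) :
    (hpow C m).det = C.det ^ m := by
  rw [isDiag_fin_two_iff, supportedOnOneColumn_fin_two_iff,
    supportedOnOneRow_fin_two_iff] at h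
  simp only [det_fin_two, hpow, of_apply]
  rcases h with ⟨h, h'⟩ | (⟨h, h'⟩ | ⟨h, h'⟩) | (⟨h, h'⟩ | ⟨h, h'⟩) <;>
    simp [h, h', zero_pow hm, mul_pow]

section HadamardSquare

variable {R : Type*} [CommRing R] [NoZeroDivisors R]

theorem mul_eq_zero_of_add_sq_eq [NeZero (2 : R)] {s t : R}
    (h : (s + t) ^ 2 = s ^ 2 + t ^ 2) : s * t = 0 := by
  have h2 : 2 * (s * t) = 0 := by linear_combination h
  exact (mul_eq_zero.mp h2).resolve_left two_ne_zero

theorem mul_entries_eq_zero_of_hpow_two_mul [NeZero (2 : R)] {C D : Matrix (Fin 2) (Fin 2) R}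
    (h : hpow (C * D) 2 = hpow C 2 * hpow D 2) (i l : Fin 2) :
    C i 0 * D 0 l * (C i 1 * D 1 l) = 0 := by
  have hil := congrFun (congrFun h i) l
  simp only [hpow, mul_apply, Fin.sum_univ_two, of_apply, ← mul_pow] at hil
  exact mul_eq_zero_of_add_sq_eq hil

theorem antidiag_mul_det_eq_zero_of_det_hpow_two [NeZero (2 : R)] {C : Matrix (Fin 2) (Fin 2) R}
    (h : (hpow C 2).det = C.det ^ 2) : C 0 1 * C 1 0 * C.det = 0 := by
  simp only [det_fin_two, hpow, of_apply] at h ⊢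
  have h2 : 2 * (C 0 1 * C 1 0 * (C 0 0 * C 1 1 - C 0 1 * C 1 0)) = 0 := by
    linear_combination h
  exact (mul_eq_zero.mp h2).resolve_left two_ne_zero

theorem isDiag_or_supportedOnOneColumn_or_supportedOnOneRow {C : Matrix (Fin 2) (Fin 2) R}
    (hsq : ∀ i l, C i 0 * C 0 l * (C i 1 * C 1 l) = 0) (hdet : C 0 1 * C 1 0 * C.det = 0) :
    C.IsDiag ∨ C.SupportedOnOneColumn ∨ C.SupportedOnOneRow := by
  rw [isDiag_fin_two_iff, supportedOnOneColumn_fin_two_iff, supportedOnOneRow_fin_two_iff]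
  rw [det_fin_two] at hdet
  have h00 := hsq 0 0
  have h01 := hsq 0 1
  have h10 := hsq 1 0
  have h11 := hsq 1 1
  by_cases hb : C 0 1 = 0 <;> by_cases hc : C 1 0 = 0
  · tauto
  · simp only [mul_eq_zero] at h10; tauto
  · simp only [mul_eq_zero] at h01; tauto
  · simp only [mul_eq_zero, hb, hc, or_false, false_or, or_self] at h00 h11
    simp [h00, h11, hb, hc] at hdet

theorem supportedOnOneRow_of_mul_entries_eq_zero {C D : Matrix (Fin 2) (Fin 2) R}
    (hC : C.SupportedOnOneRow) (hC' : ¬ C.SupportedOnOneColumn) (hD : D.SupportedOnOneColumn)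
    (hCD : ∀ i l, C i 0 * D 0 l * (C i 1 * D 1 l) = 0) : D.SupportedOnOneRow := by
  obtain ⟨i, hi0, hi1⟩ := exists_row_ne_zero_of_not_supportedOnOneColumn hC hC'
  have hcol : ∀ l, D 0 l = 0 ∨ D 1 l = 0 := fun l => by
    simpa [hi0, hi1] using hCD i l
  rw [supportedOnOneColumn_fin_two_iff] at hD
  rw [supportedOnOneRow_fin_two_iff]
  rcases hD with ⟨h01, h11⟩ | ⟨h00, h10⟩
  · rcases hcol 0 with h | h <;> simp [*]
  · rcases hcol 1 with h | h <;> simp [*]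

end HadamardSquare

/-- Characterization of monoids of `2 × 2` matrices over a linearly ordered
field on which the Hadamard power and determinant are compatible: they are
exactly the monoids contained in `D₂(F) ∪ C₂(F)` or in `D₂(F) ∪ R₂(F)`. -/
theorem monoid_two_equiv {F : Type*} [Field F] [LinearOrder F] [IsStrictOrderedRing F]
    (M : Set (Matrix (Fin 2) (Fin 2) F)) :
    ((1 : Matrix (Fin 2) (Fin 2) F) ∈ M ∧ (∀ C ∈ M, ∀ D ∈ M, C * D ∈ M) ∧
      (∀ C ∈ M, ∀ m : ℕ, 0 < m → (hpow C m).det = C.det ^ m) ∧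
      (∀ C ∈ M, ∀ D ∈ M, ∀ m : ℕ, 0 < m → hpow (C * D) m = hpow C m * hpow D m)) ↔
    ((1 : Matrix (Fin 2) (Fin 2) F) ∈ M ∧ (∀ C ∈ M, ∀ D ∈ M, C * D ∈ M) ∧
      ((∀ C ∈ M, C.IsDiag ∨ ∃ j, ∀ j', j' ≠ j → ∀ i, C i j' = 0) ∨
       (∀ C ∈ M, C.IsDiag ∨ ∃ i, ∀ i', i' ≠ i → ∀ j, C i' j = 0))) := by
  constructor
  · rintro ⟨h1, hmul, hdet, hhad⟩
    have hsq : ∀ C ∈ M, ∀ D ∈ M, ∀ i l, C i 0 * D 0 l * (C i 1 * D 1 l) = 0 :=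
      fun C hC D hD => mul_entries_eq_zero_of_hpow_two_mul (hhad C hC D hD 2 two_pos)
    have hshape : ∀ C ∈ M, C.IsDiag ∨ C.SupportedOnOneColumn ∨ C.SupportedOnOneRow :=
      fun C hC => isDiag_or_supportedOnOneColumn_or_supportedOnOneRow (hsq C hC C hC)
        (antidiag_mul_det_eq_zero_of_det_hpow_two (hdet C hC 2 two_pos))
    refine ⟨h1, hmul, or_iff_not_imp_left.mpr fun hcol => ?_⟩
    obtain ⟨C, hC, hCnot⟩ := not_forall₂.mp hcol
    obtain ⟨hCdiag, hCcol⟩ := not_or.mp hCnot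
    have hCrow := ((hshape C hC).resolve_left hCdiag).resolve_left hCcol
    intro D hD
    rcases hshape D hD with hDdiag | hDcol | hDrow
    · exact .inl hDdiag
    · exact .inr (supportedOnOneRow_of_mul_entries_eq_zero hCrow hCcol hDcol (hsq C hC D hD))
    · exact .inr hDrow
  · rintro ⟨h1, hmul, hshape | hshape⟩ <;> refine ⟨h1, hmul, fun C hC m hm => ?_, ?_⟩
    · exact det_hpow_fin_two ((hshape C hC).imp_right .inl) hm.ne'
    · exact fun C hC D _ m hm => hpow_mul_of_eachRowSupportedOnOne ((hshape C hC).elim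
        IsDiag.eachRowSupportedOnOne SupportedOnOneColumn.eachRowSupportedOnOne) D hm.ne'
    · exact det_hpow_fin_two ((hshape C hC).imp_right .inr) hm.ne'
    · exact fun C _ D hD m hm => hpow_mul_of_eachColumnSupportedOnOne C ((hshape D hD).elim
        IsDiag.eachColumnSupportedOnOne SupportedOnOneRow.eachColumnSupportedOnOne) hm.ne'
end
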